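/- Let K be a compact Hausdorff space and let N ⊆ C(K, ℂ) be the kernel of the multiplication operator by some g ∈ C(K, ℂ). Then N is biorthogonally complemented: N^⊥⊥ = N, where orthogonal complements are taken with respect to the C(K,ℂ)-valued inner product ⟨f,h⟩ = f · conj(h). -/
import Mathlib


theorem stmt_13 (K : Type*) [TopologicalSpace K] [CompactSpace K] [T2Space K]
    (g : C(K, ℂ)) (N : Set C(K, ℂ)) (hN : N = {f | g * f = 0})
    (perp : Set C(K, ℂ) → Set C(K, ℂ))
    (hperp : ∀ S, perp S = {h | ∀ f ∈ S, f * star h = 0}) :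
    perp (perp N) = N := by
  have hsg : star g ∈ perp N := by
    rw [hperp]
    intro f hf
    rw [hN] at hf
    simp only [Set.mem_setOf_eq] at hf ⊢
    rw [star_star, mul_comm]
    exact hf
  ext k
  constructor
  · intro hk
    rw [hperp] at hk
    have := hk (star g) hsg
    have h2 : k * g = 0 := by
      have := congrArg star this
      simpa [mul_comm] using this
    rw [hN]
    simpa [mul_comm] using h2
  · intro hk
    rw [hperp]
    intro h hh
    rw [hperp] at hh
    have := hh k hk
    have := congrArg star this
    simpa [mul_comm] using this
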